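/- Let $\Gamma$ be a finite connected graph on a nonempty vertex set $V$ of size $n$, whose edges consist of: $\ell_2$ vertices carrying an $a$-loop, $k_2$ isolated $a$-edges (unordered pairs of distinct vertices), $\ell_3$ vertices carrying a $b$-loop, $k_3$ isolated $b$-edges, and $m$ $b$-triangles (3-element subsets), such that every vertex is incident to exactly one $a$-item (loop or isolated $a$-edge) and exactly one $b$-item (loop, isolated $b$-edge, or $b$-triangle). Then $n = 2k_2 + \ell_2 = 2k_3 + \ell_3 + 3m$, the integer $m - \ell_2 - \ell_3$ is even, and $m - \ell_2 - \ell_3 \ge -2$. -/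

import Mathlib

/-- A `τ₃`-structure on a set, encoded as a partial function `f : α → Option α`:
`f` is injective on its domain, every element is in the domain or is the head of a
directed edge, and each directed edge is a loop, an isolated directed edge, or part of
a directed 3-cycle. -/
def IsTau3 {α : Type*} (f : α → Option α) : Prop :=
  (∀ x y z, f x = some z → f y = some z → x = y) ∧
  (∀ x, (f x).isSome = true ∨ ∃ y, f y = some x) ∧
  (∀ x y, f x = some y → x ≠ y →
    (f y = none ∧ ∀ z, f z ≠ some x) ∨
    (∃ z, f y = some z ∧ f z = some x ∧ y ≠ z ∧ z ≠ x))

/-- `x` lies on an isolated (directed) `b`-edge of the `τ₃`-structure `f`. -/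
def InPair {α : Type*} (f : α → Option α) (x : α) : Prop :=
  (∃ y, x ≠ y ∧ f x = some y ∧ f y = none) ∨
  (∃ y, y ≠ x ∧ f y = some x ∧ f x = none)

/-- `x` lies on a `b`-triangle (oriented 3-cycle) of the `τ₃`-structure `f`. -/
def InTriangle {α : Type*} (f : α → Option α) (x : α) : Prop :=
  ∃ y z, x ≠ y ∧ y ≠ z ∧ z ≠ x ∧ f x = some y ∧ f y = some z ∧ f z = some x


/-!
Counting the `a`-items and the `b`-items at each vertex gives the two expressions for `n`, and the
parity of `m - ℓ₂ - ℓ₃` follows from them. For the inequality, fix a linear order on `V` and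
remove from `Γ`, in each `b`-triangle, the edge leaving its largest vertex. The rest is still
connected, because the two other edges of the triangle bridge the removed one, and it has at most
`k₂ + k₃ + 2m` edges, so `n - 1 ≤ k₂ + k₃ + 2m`. Together with
`2n = 2k₂ + ℓ₂ + 2k₃ + ℓ₃ + 3m` this is `ℓ₂ + ℓ₃ ≤ m + 2`.
-/

open Finset SimpleGraph

namespace SimpleGraph

variable {V : Type*}

theorem card_edgeSet_sup_le [Finite V] (G H : SimpleGraph V) :
    Nat.card (G ⊔ H).edgeSet ≤ Nat.card G.edgeSet + Nat.card H.edgeSet := by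
  simp only [edgeSet_sup, Nat.card_coe_set_eq]
  exact Set.ncard_union_le _ _

theorem card_edgeSet_fromRel_le [Finite V] {r : V → V → Prop}
    (hr : ∀ u v w, r u v → r u w → v = w) :
    Nat.card (fromRel r).edgeSet ≤ Nat.card {u // ∃ v, u ≠ v ∧ r u v} := by
  choose f hf using fun u : {u // ∃ v, u ≠ v ∧ r u v} => u.2
  refine Nat.card_le_card_of_surjective
    (fun u => ⟨s(u, f u), (fromRel_adj ..).2 ⟨(hf u).1, .inl (hf u).2⟩⟩) ?_
  rintro ⟨e, he⟩
  induction e using Sym2.ind with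
  | h u v =>
    obtain ⟨huv, h | h⟩ := (fromRel_adj ..).1 ((mem_edgeSet _).1 he)
    · refine ⟨⟨u, v, huv, h⟩, Subtype.ext ?_⟩
      simp only [hr _ _ _ (hf ⟨u, v, huv, h⟩).2 h]
    · refine ⟨⟨v, u, huv.symm, h⟩, Subtype.ext ?_⟩
      simp only [hr _ _ _ (hf ⟨v, u, huv.symm, h⟩).2 h, Sym2.eq_swap]

end SimpleGraph

section Tau3

variable {V : Type*} {b : V → Option V} {x y : V}

def nextOf (b : V → Option V) (x : V) : V := (b x).getD x

lemma nextOf_eq (h : b x = some y) : nextOf b x = y := by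
  simp [nextOf, h]

def IsPairSource (b : V → Option V) (x : V) : Prop :=
  ∃ y, x ≠ y ∧ b x = some y ∧ b y = none

def IsPairTarget (b : V → Option V) (y : V) : Prop :=
  ∃ x, x ≠ y ∧ b x = some y ∧ b y = none

lemma IsTau3.loop_or_inPair_or_inTriangle (hb : IsTau3 b) (x : V) :
    b x = some x ∨ InPair b x ∨ InTriangle b x := by
  rcases hb.2.1 x with h | ⟨y, hy⟩
  · obtain ⟨y, hy⟩ := Option.isSome_iff_exists.mp h
    obtain rfl | hxy := eq_or_ne x y
    · exact .inl hy
    rcases hb.2.2 x y hy hxy with ⟨hy', -⟩ | ⟨z, hyz, hzx, hyz', hzx'⟩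
    · exact .inr (.inl (.inl ⟨y, hxy, hy, hy'⟩))
    · exact .inr (.inr ⟨y, z, hxy, hyz', hzx', hy, hyz, hzx⟩)
  · obtain rfl | hyx := eq_or_ne y x
    · exact .inl hy
    rcases hb.2.2 y x hy hyx with ⟨hx', -⟩ | ⟨z, hxz, hzy, hxz', hzy'⟩
    · exact .inr (.inl (.inr ⟨y, hyx, hy, hx'⟩))
    · exact .inr (.inr ⟨z, y, hxz', hzy', hyx, hxz, hzy, hy⟩)

lemma not_inPair_of_loop (hx : b x = some x) : ¬InPair b x := by
  rintro (⟨y, hxy, hy, -⟩ | ⟨y, -, hy, hnone⟩)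
  · exact hxy (Option.some.inj (hx.symm.trans hy))
  · simp [hx] at hnone

lemma not_inTriangle_of_loop (hx : b x = some x) : ¬InTriangle b x := by
  rintro ⟨y, z, hxy, -, -, hy, -⟩
  exact hxy (Option.some.inj (hx.symm.trans hy))

lemma InPair.not_inTriangle (hx : InPair b x) : ¬InTriangle b x := by
  rintro ⟨y, z, -, -, -, hy, hz, -⟩
  rcases hx with ⟨y', -, hy', hnone⟩ | ⟨-, -, -, hnone⟩
  · cases hy.symm.trans hy'
    simp [hz] at hnone
  · simp [hy] at hnone

theorem IsTau3.card_loop_add_card_inPair_add_card_inTriangle [Finite V] (hb : IsTau3 b) :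
    Nat.card {x // b x = some x} + Nat.card {x // InPair b x} + Nat.card {x // InTriangle b x}
      = Nat.card V := by
  have := Fintype.ofFinite V
  classical
  simp only [Nat.card_eq_fintype_card, Fintype.card_subtype]
  have hloop_pair : Disjoint ({x | b x = some x} : Finset V) ({x | InPair b x} : Finset V) :=
    disjoint_filter.2 fun _ _ => not_inPair_of_loop
  have hpair_tri : Disjoint ({x | b x = some x ∨ InPair b x} : Finset V)
      ({x | InTriangle b x} : Finset V) :=
    disjoint_filter.2 fun _ _ hx => hx.elim not_inTriangle_of_loop InPair.not_inTriangle
  rw [← card_union_of_disjoint hloop_pair, ← filter_or, ← card_union_of_disjoint hpair_tri,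
    ← filter_or, filter_true_of_mem fun x _ => or_assoc.2 (hb.loop_or_inPair_or_inTriangle x),
    card_univ]

theorem IsTau3.two_mul_card_isPairSource_le [Finite V] (hb : IsTau3 b) :
    2 * Nat.card {x // IsPairSource b x} ≤ Nat.card {x // InPair b x} := by
  have := Fintype.ofFinite V
  classical
  simp only [Nat.card_eq_fintype_card, Fintype.card_subtype]
  have hdisj :
      Disjoint ({x | IsPairSource b x} : Finset V) ({x | IsPairTarget b x} : Finset V) := by
    refine disjoint_filter.2 fun x _ ⟨y, _, hy, _⟩ ⟨_, _, _, hnone⟩ => ?_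
    simp [hy] at hnone
  have hsplit : #{x | InPair b x} = #{x | IsPairSource b x} + #{x | IsPairTarget b x} := by
    rw [← card_union_of_disjoint hdisj, ← filter_or]
    exact congrArg card (filter_congr fun _ _ => Iff.rfl)
  have hinj : #{x | IsPairSource b x} ≤ #{x | IsPairTarget b x} := by
    refine card_le_card_of_injOn (nextOf b) (fun x hx => ?_) fun x hx x' hx' hxx' => ?_
    · obtain ⟨y, hxy, hy, hnone⟩ := (mem_filter.1 hx).2
      rw [nextOf_eq hy]
      exact mem_filter.2 ⟨mem_univ _, x, hxy, hy, hnone⟩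
    · obtain ⟨y, -, hy, -⟩ := (mem_filter.1 hx).2
      obtain ⟨y', -, hy', -⟩ := (mem_filter.1 hx').2
      rw [nextOf_eq hy, nextOf_eq hy'] at hxx'
      exact hb.1 x x' y hy (hxx' ▸ hy')
  omega

variable [LinearOrder V]

def IsTriangleTop (b : V → Option V) (x : V) : Prop :=
  InTriangle b x ∧ nextOf b x < x ∧ nextOf b (nextOf b x) < x

lemma InTriangle.exists_isTriangleTop (hx : InTriangle b x) :
    ∃ t, IsTriangleTop b t ∧ ∃ k < 3, (nextOf b)^[k] t = x := by
  obtain ⟨y, z, hxy, hyz, hzx, hy, hz, hx'⟩ := id hx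
  have hty : InTriangle b y := ⟨z, x, hyz, hzx, hxy, hz, hx', hy⟩
  have htz : InTriangle b z := ⟨x, y, hzx, hxy, hyz, hx', hy, hz⟩
  by_cases hxtop : y < x ∧ z < x
  · refine ⟨x, ⟨hx, ?_⟩, 0, by norm_num, rfl⟩
    rwa [nextOf_eq hy, nextOf_eq hz]
  by_cases hytop : z < y ∧ x < y
  · refine ⟨y, ⟨hty, ?_⟩, 2, by norm_num, ?_⟩
    · rwa [nextOf_eq hz, nextOf_eq hx']
    · simp only [Function.iterate_succ_apply', Function.iterate_zero_apply, nextOf_eq hz,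
        nextOf_eq hx']
  have hztop : x < z ∧ y < z := by grind
  refine ⟨z, ⟨htz, ?_⟩, 1, by norm_num, nextOf_eq hx'⟩
  rwa [nextOf_eq hx', nextOf_eq hy]

theorem card_inTriangle_le [Finite V] :
    Nat.card {x // InTriangle b x} ≤ 3 * Nat.card {x // IsTriangleTop b x} := by
  have := Fintype.ofFinite V
  classical
  simp only [Nat.card_eq_fintype_card, Fintype.card_subtype]
  calc #{x | InTriangle b x}
      ≤ #((({x | IsTriangleTop b x} : Finset V) ×ˢ range 3).image
          fun p => (nextOf b)^[p.2] p.1) := by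
        refine card_le_card fun x hx => ?_
        obtain ⟨t, ht, k, hk, rfl⟩ := (mem_filter.1 hx).2.exists_isTriangleTop
        simp only [mem_image, mem_product, mem_filter, mem_univ, true_and, mem_range]
        exact ⟨(t, k), ⟨ht, hk⟩, rfl⟩
    _ ≤ #(({x | IsTriangleTop b x} : Finset V) ×ˢ range 3) := card_image_le
    _ = 3 * #{x | IsTriangleTop b x} := by rw [card_product, card_range, mul_comm]

theorem three_mul_card_inTriangle_not_isTriangleTop_le [Finite V] :
    3 * Nat.card {x // InTriangle b x ∧ ¬IsTriangleTop b x} ≤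
      2 * Nat.card {x // InTriangle b x} := by
  have htop := card_inTriangle_le (b := b)
  have := Fintype.ofFinite V
  classical
  simp only [Nat.card_eq_fintype_card, Fintype.card_subtype] at htop ⊢
  have hsplit := card_filter_add_card_filter_not (s := {x | InTriangle b x}) (IsTriangleTop b)
  simp only [filter_filter] at hsplit
  have htop_sub : ({x | InTriangle b x ∧ IsTriangleTop b x} : Finset V) =
      ({x | IsTriangleTop b x} : Finset V) :=
    filter_congr fun _ _ => ⟨And.right, fun h => ⟨h.1, h⟩⟩
  rw [htop_sub] at hsplit
  omega

end Tau3

theorem Function.Involutive.two_mul_card_lt_apply {V : Type*} [Finite V] [LinearOrder V]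
    {f : V → V} (hf : Function.Involutive f) :
    2 * Nat.card {x // x < f x} = Nat.card {x // f x ≠ x} := by
  have := Fintype.ofFinite V
  classical
  simp only [Nat.card_eq_fintype_card, Fintype.card_subtype]
  have hswap : #{x | f x < x} = #{x | x < f x} :=
    card_nbij' f f (fun x hx => by simpa [hf x] using hx) (fun x hx => by simpa [hf x] using hx)
      (fun x _ => hf x) (fun x _ => hf x)
  have hdisj : Disjoint ({x | x < f x} : Finset V) ({x | f x < x} : Finset V) :=
    disjoint_filter.2 fun _ _ => lt_asymm
  rw [two_mul]
  nth_rw 2 [← hswap]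
  rw [← card_union_of_disjoint hdisj, ← filter_or]
  exact congrArg card (filter_congr fun x _ => by rw [ne_comm, ne_iff_lt_or_gt])

section Graphs

variable {V : Type*} [LinearOrder V] {f : V → V} {b : V → Option V} {u v : V}

def aGraph (f : V → V) : SimpleGraph V :=
  fromRel fun u v => u < v ∧ f u = v

def bGraph (b : V → Option V) : SimpleGraph V :=
  fromRel fun u v => b u = some v ∧ ¬IsTriangleTop b u

lemma aGraph_reachable (hf : Function.Involutive f) (u : V) : (aGraph f).Reachable u (f u) := by
  rcases lt_trichotomy u (f u) with h | h | h
  · exact Adj.reachable ((fromRel_adj ..).2 ⟨h.ne, .inl ⟨h, rfl⟩⟩)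
  · rw [← h]
  · exact Adj.reachable ((fromRel_adj ..).2 ⟨h.ne', .inr ⟨h, hf u⟩⟩)

lemma bGraph_reachable (h : b u = some v) : (bGraph b).Reachable u v := by
  have hadj : ∀ {u v}, u ≠ v → b u = some v → ¬IsTriangleTop b u →
      (bGraph b).Reachable u v :=
    fun huv h htop => Adj.reachable ((fromRel_adj ..).2 ⟨huv, .inl ⟨h, htop⟩⟩)
  by_cases htop : IsTriangleTop b u
  · obtain ⟨⟨y, z, -, hyz, hzu, hy, hz, hu⟩, hyu, hzu'⟩ := htop
    cases h.symm.trans hy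
    rw [nextOf_eq hy] at hyu hzu'
    rw [nextOf_eq hz] at hzu'
    have hy_top : ¬IsTriangleTop b v := fun ⟨_, _, h⟩ => by
      rw [nextOf_eq hz, nextOf_eq hu] at h
      exact lt_asymm h hyu
    have hz_top : ¬IsTriangleTop b z := fun ⟨_, h, _⟩ => by
      rw [nextOf_eq hu] at h
      exact lt_asymm h hzu'
    exact ((hadj hyz hz hy_top).trans (hadj hzu hu hz_top)).symm
  · obtain rfl | huv := eq_or_ne u v
    · rfl
    · exact hadj huv h htop

theorem connected_aGraph_sup_bGraph [Nonempty V] (hf : Function.Involutive f)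
    (hconn : ∀ x y : V,
      Relation.ReflTransGen (fun u v => f u = v ∨ b u = some v ∨ b v = some u) x y) :
    (aGraph f ⊔ bGraph b).Connected := by
  have hstep : ∀ u v, (f u = v ∨ b u = some v ∨ b v = some u) →
      (aGraph f ⊔ bGraph b).Reachable u v := by
    rintro u v (rfl | h | h)
    · exact (aGraph_reachable hf u).mono le_sup_left
    · exact (bGraph_reachable h).mono le_sup_right
    · exact ((bGraph_reachable h).mono le_sup_right).symm
  refine (connected_iff _).2 ⟨fun x y => ?_, ‹_›⟩
  induction hconn x y with
  | refl => rfl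
  | tail _ huv ih => exact ih.trans (hstep _ _ huv)

theorem card_edgeSet_aGraph_le [Finite V] (f : V → V) :
    Nat.card (aGraph f).edgeSet ≤ Nat.card {u // u < f u} :=
  (card_edgeSet_fromRel_le (by rintro u v w ⟨-, rfl⟩ ⟨-, rfl⟩; rfl)).trans
    (Nat.card_mono (Set.toFinite _) <| by rintro _ ⟨_, _, hlt, rfl⟩; exact hlt)

theorem IsTau3.card_edgeSet_bGraph_le [Finite V] (hb : IsTau3 b) :
    Nat.card (bGraph b).edgeSet ≤
      Nat.card {x // IsPairSource b x} +
        Nat.card {x // InTriangle b x ∧ ¬IsTriangleTop b x} := by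
  refine (card_edgeSet_fromRel_le ?_).trans ((Nat.card_mono (Set.toFinite _) ?_).trans
    (Set.card_union_le {x | IsPairSource b x} {x | InTriangle b x ∧ ¬IsTriangleTop b x}))
  · rintro u v w ⟨hv, -⟩ ⟨hw, -⟩
    exact Option.some.inj (hv.symm.trans hw)
  · rintro u ⟨v, huv, hv, htop⟩
    rcases hb.2.2 u v hv huv with ⟨hnone, -⟩ | ⟨w, hw, hwu, hvw, hwu'⟩
    · exact .inl ⟨v, huv, hv, hnone⟩
    · exact .inr ⟨⟨v, w, huv, hvw, hwu', hv, hw, hwu⟩, htop⟩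

end Graphs

/-- Combinatorial type of a connected proper `PSL₂(ℤ)`-cyclically reduced graph: the
`a`-edges form an involution `α` (`ℓ₂` loops, `k₂` isolated `a`-edges), the `b`-edges a
`τ₃`-structure `b` (`ℓ₃` loops, `k₃` isolated `b`-edges, `m` `b`-triangles), the graph
is connected, and every vertex carries exactly one `a`-item and one `b`-item.  Then
`n = 2k₂+ℓ₂ = 2k₃+ℓ₃+3m`, `m-ℓ₂-ℓ₃` is even and `m-ℓ₂-ℓ₃ ≥ -2`. -/
theorem stmt7 (V : Type*) [Fintype V] [Nonempty V]
    (α : Equiv.Perm V) (hα : α ^ 2 = 1)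
    (b : V → Option V) (hb : IsTau3 b)
    (n k2 k3 ℓ2 ℓ3 m : ℕ)
    (hn : n = Nat.card V)
    (hℓ2 : ℓ2 = Nat.card {x : V // α x = x})
    (hk2 : 2 * k2 = Nat.card {x : V // α x ≠ x})
    (hℓ3 : ℓ3 = Nat.card {x : V // b x = some x})
    (hk3 : 2 * k3 = Nat.card {x : V // InPair b x})
    (hm : 3 * m = Nat.card {x : V // InTriangle b x})
    (hconn : ∀ x y : V,
      Relation.ReflTransGen (fun u v => α u = v ∨ b u = some v ∨ b v = some u) x y) :
    n = 2 * k2 + ℓ2 ∧ n = 2 * k3 + ℓ3 + 3 * m ∧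
      Even ((m : ℤ) - ℓ2 - ℓ3) ∧ (-2 : ℤ) ≤ (m : ℤ) - ℓ2 - ℓ3 := by
  let : LinearOrder V := LinearOrder.lift' _ (Fintype.equivFin V).injective
  have hαα : Function.Involutive α := fun x => by
    rw [← Equiv.Perm.mul_apply, ← sq, hα, Equiv.Perm.one_apply]
  have hfix : Nat.card {x // α x = x} + Nat.card {x // α x ≠ x} = Nat.card V :=
    Set.ncard_add_ncard_compl {x | α x = x}
  have hpart := hb.card_loop_add_card_inPair_add_card_inTriangle
  have hspan := (connected_aGraph_sup_bGraph hαα hconn).card_vert_le_card_edgeSet_add_one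
  have hedges := card_edgeSet_sup_le (aGraph α) (bGraph b)
  have ha := card_edgeSet_aGraph_le α
  have hbe := hb.card_edgeSet_bGraph_le
  have ha2 := hαα.two_mul_card_lt_apply
  have hpair := hb.two_mul_card_isPairSource_le
  have htri := three_mul_card_inTriangle_not_isTriangleTop_le (b := b)
  refine ⟨by omega, by omega, Int.even_iff.2 (by omega), by omega⟩
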